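/- Let V be a d×d real matrix with no zero rows, and let L_k : M(k,d) → ℝ and L_{k̄} : M(k̄,d) → ℝ denote the losses with target V, where k̄ = k + n and n ≥ 1. Let W ∈ M(k,d) have no zero rows, and suppose L_k is Fréchet differentiable at W with derivative 0. Let α_0,…,α_n > 0 with Σ_{ℓ=0}^n α_ℓ = 1, and define U ∈ M(k̄,d) by u_i = w_i for i ∈ [k−1] and u_{k+ℓ} = α_ℓ · w_k for ℓ = 0,…,n. If L_{k̄} is Fréchet differentiable at U, then its derivative at U is 0; i.e., U is a critical point of L_{k̄}. -/

import Mathlib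

open MeasureTheory ProbabilityTheory

/-- The ReLU function. -/
noncomputable def relu (z : ℝ) : ℝ := max z 0

/-- The standard Gaussian probability measure on `ℝ^d`. -/
noncomputable def stdGaussian (d : ℕ) : Measure (Fin d → ℝ) :=
  Measure.pi fun _ => gaussianReal 0 1

/-- Euclidean inner product on `ℝ^d`. -/
noncomputable def dot {d : ℕ} (w v : Fin d → ℝ) : ℝ := ∑ j, w j * v j

/-- The loss with target the `d × d` matrix `V`, for a weight matrix whose rows
are indexed by an arbitrary finite type `ι`. -/
noncomputable def lossV {ι : Type} [Fintype ι] (d : ℕ)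
    (W : ι → Fin d → ℝ) (V : Fin d → Fin d → ℝ) : ℝ :=
  (1 / 2) * ∫ x, ((∑ i, relu (dot (W i) x)) - ∑ j, relu (dot (V j) x)) ^ 2 ∂(stdGaussian d)

lemma abs_relu_le (z : ℝ) : |relu z| ≤ |z| := by
  rw [relu, abs_of_nonneg (le_max_right z 0)]
  exact max_le (le_abs_self z) (abs_nonneg z)

lemma relu_lip (a b : ℝ) : |relu a - relu b| ≤ |a - b| := abs_max_sub_max_le_abs a b 0

lemma relu_mul {c : ℝ} (hc : 0 ≤ c) (z : ℝ) : relu (c * z) = c * relu z := by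
  rw [relu, relu, mul_max_of_nonneg _ _ hc, mul_zero]

lemma dot_add {d : ℕ} (w₁ w₂ x : Fin d → ℝ) : dot (w₁ + w₂) x = dot w₁ x + dot w₂ x := by
  simp [dot, add_mul, Finset.sum_add_distrib]

lemma dot_smul {d : ℕ} (c : ℝ) (w x : Fin d → ℝ) : dot (c • w) x = c * dot w x := by
  simp [dot, Finset.mul_sum, mul_assoc]

lemma continuous_dot {d : ℕ} (w : Fin d → ℝ) : Continuous fun x => dot w x := by
  unfold dot; fun_prop

instance stdGaussian_prob (d : ℕ) : IsProbabilityMeasure (stdGaussian d) := by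
  rw [_root_.stdGaussian]; infer_instance

lemma map_eval_stdGaussian (d : ℕ) (j : Fin d) :
    (stdGaussian d).map (fun x => x j) = gaussianReal 0 1 := by
  ext s hs
  rw [Measure.map_apply (measurable_pi_apply j) hs]
  have h1 : (fun x : Fin d → ℝ => x j) ⁻¹' s
      = Set.pi Set.univ (Function.update (fun _ : Fin d => (Set.univ : Set ℝ)) j s) := by
    ext x
    simp only [Set.mem_preimage, Set.mem_univ_pi]
    constructor
    · intro hx i
      rcases eq_or_ne i j with rfl | hij
      · simpa [Function.update] using hx
      · simp [Function.update, hij]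
    · intro hx
      have := hx j
      simpa [Function.update] using this
  rw [h1, _root_.stdGaussian, Measure.pi_pi]
  rw [Finset.prod_eq_single j]
  · simp [Function.update]
  · intro i _ hij
    simp [Function.update, hij]
  · simp

lemma integrable_sq_gaussian : Integrable (fun y : ℝ => y ^ 2) (gaussianReal 0 1) := by
  rw [gaussianReal_of_var_ne_zero 0 one_ne_zero]
  rw [integrable_withDensity_iff_integrable_smul' (measurable_gaussianPDF 0 1)
    (ae_of_all _ fun x => ENNReal.ofReal_lt_top)]
  have hpdf : ∀ x : ℝ, (gaussianPDF 0 1 x).toReal = (Real.sqrt (2 * Real.pi))⁻¹ * Real.exp (-(2:ℝ)⁻¹ * x ^ 2) := by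
    intro x
    rw [gaussianPDF, ENNReal.toReal_ofReal (gaussianPDFReal_nonneg 0 1 x), gaussianPDFReal]
    congr 1
    · norm_num
    · congr 1
      push_cast
      ring
  have : (fun x : ℝ => (gaussianPDF 0 1 x).toReal • x ^ 2)
      = fun x => (Real.sqrt (2 * Real.pi))⁻¹ * (x ^ 2 * Real.exp (-(2:ℝ)⁻¹ * x ^ 2)) := by
    funext x; rw [hpdf x]; simp [smul_eq_mul]; ring
  rw [this]
  apply Integrable.const_mul
  have h := integrable_rpow_mul_exp_neg_mul_sq (b := (2:ℝ)⁻¹) (by norm_num) (s := (2:ℝ)) (by norm_num)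
  have h2 : (fun x : ℝ => x ^ (2:ℝ) * Real.exp (-(2:ℝ)⁻¹ * x ^ 2))
      = fun x : ℝ => x ^ 2 * Real.exp (-(2:ℝ)⁻¹ * x ^ 2) := by
    funext x; rw [show ((2:ℝ) = ((2:ℕ):ℝ)) by norm_num, Real.rpow_natCast]
  rwa [h2] at h

lemma memℒp_coord (d : ℕ) (j : Fin d) :
    MemLp (fun x : Fin d → ℝ => x j) 2 (stdGaussian d) := by
  rw [memLp_two_iff_integrable_sq (measurable_pi_apply j).aestronglyMeasurable]
  have h := integrable_sq_gaussian
  rw [← map_eval_stdGaussian d j] at h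
  exact (integrable_map_measure (continuous_pow 2).aestronglyMeasurable (measurable_pi_apply j).aemeasurable).mp h

lemma memℒp_dot {d : ℕ} (w : Fin d → ℝ) :
    MemLp (fun x => dot w x) 2 (stdGaussian d) := by
  have : (fun x : Fin d → ℝ => dot w x) = fun x => ∑ j, w j * x j := by
    funext x; rfl
  rw [this]
  exact memLp_finset_sum _ fun j _ => (memℒp_coord d j).const_mul (w j)

lemma memℒp_relu_dot {d : ℕ} (w : Fin d → ℝ) :
    MemLp (fun x => relu (dot w x)) 2 (stdGaussian d) := by
  refine (memℒp_dot w).of_le ?_ (ae_of_all _ fun x => ?_)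
  · exact (((continuous_dot w).max continuous_const)).aestronglyMeasurable
  · simpa [Real.norm_eq_abs] using abs_relu_le (dot w x)

lemma memℒp_net {ι : Type} [Fintype ι] {d : ℕ} (W : ι → Fin d → ℝ) :
    MemLp (fun x => ∑ i, relu (dot (W i) x)) 2 (stdGaussian d) :=
  memLp_finset_sum _ fun i _ => memℒp_relu_dot (W i)

lemma memℒp_resid {ι : Type} [Fintype ι] {d : ℕ} (W : ι → Fin d → ℝ) (V : Fin d → Fin d → ℝ) :
    MemLp (fun x => (∑ i, relu (dot (W i) x)) - ∑ j, relu (dot (V j) x)) 2 (stdGaussian d) :=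
  (memℒp_net W).sub (memℒp_net V)

noncomputable def sgl {I : Type} [DecidableEq I] {d : ℕ} (r : I) (v : Fin d → ℝ) :
    I → Fin d → ℝ :=
  Pi.single r v

/-- Fossilization of critical points: splitting the last row `w_{k+1}` of a critical
point `W` (with no zero rows, for a target `V` with no zero rows) into `n + 1` rows
`α_ℓ • w_{k+1}` with positive coefficients summing to one yields a critical point `U`
of the loss for the enlarged network, provided the loss is differentiable at `U`. -/
theorem stmt9 (k n d : ℕ) (hn : 1 ≤ n)
    (V : Fin d → Fin d → ℝ) (hV : ∀ j, V j ≠ 0)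
    (W : Fin (k + 1) → Fin d → ℝ) (hW : ∀ i, W i ≠ 0)
    (hcrit : HasFDerivAt (fun W' : Fin (k + 1) → Fin d → ℝ => lossV d W' V)
      (0 : (Fin (k + 1) → Fin d → ℝ) →L[ℝ] ℝ) W)
    (α : Fin (n + 1) → ℝ) (hα : ∀ ℓ, 0 < α ℓ) (hαsum : ∑ ℓ, α ℓ = 1)
    (U : Fin k ⊕ Fin (n + 1) → Fin d → ℝ)
    (hU : U = Sum.elim (fun i : Fin k => W i.castSucc)
      (fun ℓ : Fin (n + 1) => α ℓ • W (Fin.last k)))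
    (hdiff : DifferentiableAt ℝ (fun U' : Fin k ⊕ Fin (n + 1) → Fin d → ℝ => lossV d U' V) U) :
    fderiv ℝ (fun U' : Fin k ⊕ Fin (n + 1) → Fin d → ℝ => lossV d U' V) U = 0 := by
  classical
  set μ := stdGaussian d with hμ
  set F : (Fin k ⊕ Fin (n + 1) → Fin d → ℝ) → ℝ := fun U' => lossV d U' V with hF
  set G : (Fin (k + 1) → Fin d → ℝ) → ℝ := fun W' => lossV d W' V with hG
  have hA : HasFDerivAt F (fderiv ℝ F U) U := hdiff.hasFDerivAt
  set A := fderiv ℝ F U with hAdef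
  -- derivative along lines, for F at U
  have hlineF : ∀ S : Fin k ⊕ Fin (n + 1) → Fin d → ℝ,
      HasDerivAt (fun t : ℝ => F (U + t • S)) (A S) 0 := by
    intro S
    have h1 : HasDerivAt (fun t : ℝ => U + t • S) S 0 := by
      simpa using ((hasDerivAt_id (0 : ℝ)).smul_const S).const_add U
    have h2 : HasFDerivAt F A (U + (0 : ℝ) • S) := by simpa using hA
    exact h2.comp_hasDerivAt 0 h1
  -- derivative along lines, for G at W
  have hlineG : ∀ S' : Fin (k + 1) → Fin d → ℝ,
      HasDerivAt (fun s : ℝ => G (W + s • S')) 0 0 := by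
    intro S'
    have h1 : HasDerivAt (fun s : ℝ => W + s • S') S' 0 := by
      simpa using ((hasDerivAt_id (0 : ℝ)).smul_const S').const_add W
    have h2 : HasFDerivAt G (0 : (Fin (k + 1) → Fin d → ℝ) →L[ℝ] ℝ) (W + (0 : ℝ) • S') := by
      simpa using hcrit
    exact h2.comp_hasDerivAt 0 h1
  -- the residual at W
  set P : (Fin d → ℝ) → ℝ :=
    fun x => (∑ i, relu (dot (W i) x)) - ∑ j, relu (dot (V j) x) with hP
  have hPmem : MemLp P 2 μ := memℒp_resid W V
  have hP2 : Integrable (fun x => P x ^ 2) μ := hPmem.integrable_sq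
  have hGW : G W = 1 / 2 * ∫ x, P x ^ 2 ∂μ := rfl
  have hrm : ∀ (ℓ' : Fin (n + 1)) (z : ℝ), relu (α ℓ' * z) = α ℓ' * relu z :=
    fun ℓ' z => relu_mul (hα ℓ').le z
  -- case of a direction in one of the first k rows
  have hAinl : ∀ (i : Fin k) (v : Fin d → ℝ), A (sgl (Sum.inl i : Fin k ⊕ Fin (n + 1)) v) = 0 := by
    intro i v
    have key1 : ∀ t : ℝ,
        F (U + t • sgl (Sum.inl i : Fin k ⊕ Fin (n + 1)) v) = G (W + t • sgl i.castSucc v) := by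
      intro t
      have hx : ∀ x, (∑ r : Fin k ⊕ Fin (n + 1), relu (dot ((U + t • sgl (Sum.inl i : Fin k ⊕ Fin (n + 1)) v) r) x))
          = ∑ i', relu (dot ((W + t • sgl i.castSucc v) i') x) := by
        intro x
        have e1 : ∀ i' : Fin k, (U + t • sgl (Sum.inl i : Fin k ⊕ Fin (n + 1)) v) (Sum.inl i')
            = (W + t • sgl i.castSucc v) i'.castSucc := by
          intro i'
          simp [hU, sgl, Pi.single_apply, Fin.castSucc_inj]
        have e2 : (W + t • sgl i.castSucc v) (Fin.last k) = W (Fin.last k) := by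
          simp [sgl, Pi.single_apply, (Fin.castSucc_lt_last i).ne']
        have e3 : ∀ ℓ', (U + t • sgl (Sum.inl i : Fin k ⊕ Fin (n + 1)) v) (Sum.inr ℓ')
            = α ℓ' • W (Fin.last k) := by
          intro ℓ'; simp [hU, sgl]
        rw [Fintype.sum_sum_type,
          Fin.sum_univ_castSucc (f := fun i' : Fin (k + 1) =>
            relu (dot ((W + t • sgl i.castSucc v) i') x)), e2]
        simp_rw [e1, e3, dot_smul, hrm]
        rw [← Finset.sum_mul, hαsum, one_mul]
      show lossV d (U + t • sgl (Sum.inl i : Fin k ⊕ Fin (n + 1)) v) V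
          = lossV d (W + t • sgl i.castSucc v) V
      unfold lossV
      congr 1
      congr 1
      funext x
      rw [hx x]
    have h1 := hlineF (sgl (Sum.inl i : Fin k ⊕ Fin (n + 1)) v)
    have heq : (fun t : ℝ => F (U + t • sgl (Sum.inl i : Fin k ⊕ Fin (n + 1)) v))
        = fun t : ℝ => G (W + t • sgl i.castSucc v) := funext key1
    rw [heq] at h1
    exact h1.unique (hlineG (sgl i.castSucc v))
  -- case of a direction in one of the split rows
  have hAinr : ∀ (ℓ : Fin (n + 1)) (v : Fin d → ℝ), A (sgl (Sum.inr ℓ : Fin k ⊕ Fin (n + 1)) v) = 0 := by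
    intro ℓ v
    set β := α ℓ with hβdef
    have hβ : 0 < β := hα ℓ
    set q : ℝ → (Fin d → ℝ) → ℝ :=
      fun s x => relu (dot (W (Fin.last k) + s • v) x) - relu (dot (W (Fin.last k)) x) with hq
    set Q : ℝ → ℝ := fun s => ∫ x, q s x ^ 2 ∂μ with hQ
    have hqmem : ∀ s, MemLp (q s) 2 μ := fun s => (memℒp_relu_dot _).sub (memℒp_relu_dot _)
    have hq2 : ∀ s, Integrable (fun x => q s x ^ 2) μ := fun s => (hqmem s).integrable_sq
    have hPq2 : ∀ s, Integrable (fun x => (P x + q s x) ^ 2) μ :=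
      fun s => (hPmem.add (hqmem s)).integrable_sq
    -- the loss of the enlarged network along the direction
    have f1 : ∀ t : ℝ, F (U + t • sgl (Sum.inr ℓ : Fin k ⊕ Fin (n + 1)) v)
        = 1 / 2 * ∫ x, (P x + β * q (t / β) x) ^ 2 ∂μ := by
      intro t
      have hx : ∀ x, (∑ r : Fin k ⊕ Fin (n + 1), relu (dot ((U + t • sgl (Sum.inr ℓ : Fin k ⊕ Fin (n + 1)) v) r) x))
          = (∑ i, relu (dot (W i) x)) + β * q (t / β) x := by
        intro x
        rw [Fintype.sum_sum_type]
        have hinl : ∀ i' : Fin k, (U + t • sgl (Sum.inr ℓ : Fin k ⊕ Fin (n + 1)) v) (Sum.inl i')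
            = W i'.castSucc := by
          intro i'; simp [hU, sgl]
        have hsplit : β • W (Fin.last k) + t • v = β • (W (Fin.last k) + (t / β) • v) := by
          rw [smul_add, smul_smul, mul_div_cancel₀ _ hβ.ne']
        have hinr : ∑ ℓ', relu (dot ((U + t • sgl (Sum.inr ℓ : Fin k ⊕ Fin (n + 1)) v) (Sum.inr ℓ')) x)
            = relu (dot (W (Fin.last k)) x) + β * q (t / β) x := by
          rw [← Finset.sum_erase_add _ _ (Finset.mem_univ ℓ)]
          have h1 : ∀ ℓ' ∈ Finset.univ.erase ℓ,
              relu (dot ((U + t • sgl (Sum.inr ℓ : Fin k ⊕ Fin (n + 1)) v) (Sum.inr ℓ')) x)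
                = α ℓ' * relu (dot (W (Fin.last k)) x) := by
            intro ℓ' hℓ'
            have hne : ℓ' ≠ ℓ := Finset.ne_of_mem_erase hℓ'
            have : (U + t • sgl (Sum.inr ℓ : Fin k ⊕ Fin (n + 1)) v) (Sum.inr ℓ') = α ℓ' • W (Fin.last k) := by
              simp [hU, sgl, Pi.single_apply, hne]
            rw [this, dot_smul, hrm]
          rw [Finset.sum_congr rfl h1, ← Finset.sum_mul]
          have hsum' : ∑ ℓ' ∈ Finset.univ.erase ℓ, α ℓ' = 1 - β := by
            have h := Finset.sum_erase_add Finset.univ α (Finset.mem_univ ℓ)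
            rw [hαsum] at h
            linarith [h, hβdef]
          have hterm : (U + t • sgl (Sum.inr ℓ : Fin k ⊕ Fin (n + 1)) v) (Sum.inr ℓ)
              = β • (W (Fin.last k) + (t / β) • v) := by
            rw [← hsplit]
            simp [hU, sgl, hβdef]
          rw [hsum', hterm, dot_smul, relu_mul hβ.le]
          simp only [hq]
          ring
        rw [Fin.sum_univ_castSucc (f := fun i => relu (dot (W i) x))]
        rw [hinr]
        have : ∑ i' : Fin k, relu (dot ((U + t • sgl (Sum.inr ℓ : Fin k ⊕ Fin (n + 1)) v) (Sum.inl i')) x)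
            = ∑ i' : Fin k, relu (dot (W i'.castSucc) x) := by
          refine Finset.sum_congr rfl fun i' _ => ?_; rw [hinl i']
        rw [this]
        ring
      show lossV d (U + t • sgl (Sum.inr ℓ : Fin k ⊕ Fin (n + 1)) v) V = _
      unfold lossV
      congr 1
      congr 1
      funext x
      rw [hx x]
      simp only [hP]
      ring
    -- the loss of the original network along the corresponding direction
    have f2 : ∀ s : ℝ, G (W + s • sgl (Fin.last k) v)
        = 1 / 2 * ∫ x, (P x + q s x) ^ 2 ∂μ := by
      intro s
      have hx : ∀ x, (∑ i, relu (dot ((W + s • sgl (Fin.last k) v) i) x))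
          = (∑ i, relu (dot (W i) x)) + q s x := by
        intro x
        rw [Fin.sum_univ_castSucc (f := fun i => relu (dot ((W + s • sgl (Fin.last k) v) i) x)),
          Fin.sum_univ_castSucc (f := fun i => relu (dot (W i) x))]
        have h1 : ∀ i' : Fin k, (W + s • sgl (Fin.last k) v) i'.castSucc
            = W i'.castSucc := by
          intro i'; simp [sgl, Pi.single_apply, (Fin.castSucc_lt_last i').ne]
        have h2 : (W + s • sgl (Fin.last k) v) (Fin.last k)
            = W (Fin.last k) + s • v := by
          simp [sgl]
        simp_rw [h1, h2]
        simp only [hq]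
        ring
      show lossV d (W + s • sgl (Fin.last k) v) V = _
      unfold lossV
      congr 1
      congr 1
      funext x
      rw [hx x]
      simp only [hP]
      ring
    -- the master identity
    have key2 : ∀ t : ℝ, F (U + t • sgl (Sum.inr ℓ : Fin k ⊕ Fin (n + 1)) v)
        = (1 - β) * G W + (β * G (W + (t / β) • sgl (Fin.last k) v)
            + ((β ^ 2 - β) / 2) * Q (t / β)) := by
      intro t
      rw [f1 t, f2 (t / β), hGW]
      have hsplit : ∫ x, (P x + β * q (t / β) x) ^ 2 ∂μ
          = (1 - β) * (∫ x, P x ^ 2 ∂μ) + (β * (∫ x, (P x + q (t / β) x) ^ 2 ∂μ)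
              + (β ^ 2 - β) * ∫ x, q (t / β) x ^ 2 ∂μ) := by
        calc ∫ x, (P x + β * q (t / β) x) ^ 2 ∂μ
            = ∫ x, ((1 - β) * P x ^ 2
                + (β * (P x + q (t / β) x) ^ 2 + (β ^ 2 - β) * q (t / β) x ^ 2)) ∂μ := by
              refine integral_congr_ae (Filter.Eventually.of_forall fun x => ?_)
              ring
          _ = (∫ x, (1 - β) * P x ^ 2 ∂μ)
                + ∫ x, (β * (P x + q (t / β) x) ^ 2 + (β ^ 2 - β) * q (t / β) x ^ 2) ∂μ :=
              integral_add (hP2.const_mul _)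
                (((hPq2 (t / β)).const_mul _).add ((hq2 (t / β)).const_mul _))
          _ = (∫ x, (1 - β) * P x ^ 2 ∂μ) + ((∫ x, β * (P x + q (t / β) x) ^ 2 ∂μ)
                + ∫ x, (β ^ 2 - β) * q (t / β) x ^ 2 ∂μ) := by
              rw [integral_add ((hPq2 (t / β)).const_mul _) ((hq2 (t / β)).const_mul _)]
          _ = (1 - β) * (∫ x, P x ^ 2 ∂μ) + (β * (∫ x, (P x + q (t / β) x) ^ 2 ∂μ)
                + (β ^ 2 - β) * ∫ x, q (t / β) x ^ 2 ∂μ) := by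
              rw [integral_const_mul, integral_const_mul, integral_const_mul]
      rw [hsplit]
      simp only [hQ]
      ring
    -- Q has derivative zero at zero
    have hQ0 : Q 0 = 0 := by
      have : ∀ x, q 0 x = 0 := by intro x; simp [hq]
      simp [hQ, this]
    have hQderiv : HasDerivAt Q 0 0 := by
      have hCint : Integrable (fun x => dot v x ^ 2) μ := (memℒp_dot v).integrable_sq
      set C := ∫ x, dot v x ^ 2 ∂μ with hC
      have hC0 : 0 ≤ C := integral_nonneg fun x => sq_nonneg _
      have hQle : ∀ s : ℝ, |Q s| ≤ C * s ^ 2 := by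
        intro s
        have h1 : ∀ x, q s x ^ 2 ≤ s ^ 2 * dot v x ^ 2 := by
          intro x
          have habs : |q s x| ≤ |s * dot v x| := by
            have hd : dot (W (Fin.last k) + s • v) x
                = dot (W (Fin.last k)) x + s * dot v x := by rw [dot_add, dot_smul]
            calc |q s x|
                = |relu (dot (W (Fin.last k) + s • v) x)
                    - relu (dot (W (Fin.last k)) x)| := by simp only [hq]
              _ ≤ |dot (W (Fin.last k) + s • v) x - dot (W (Fin.last k)) x| := relu_lip _ _
              _ = |s * dot v x| := by rw [hd, add_sub_cancel_left]
          calc q s x ^ 2 = |q s x| ^ 2 := (sq_abs _).symm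
            _ ≤ |s * dot v x| ^ 2 := pow_le_pow_left₀ (abs_nonneg _) habs 2
            _ = s ^ 2 * dot v x ^ 2 := by rw [sq_abs, mul_pow]
        have h2 : Q s ≤ s ^ 2 * C := by
          have := integral_mono (hq2 s) (hCint.const_mul (s ^ 2)) h1
          simpa [hQ, integral_const_mul] using this
        have h3 : 0 ≤ Q s := integral_nonneg fun x => sq_nonneg _
        rw [abs_of_nonneg h3]
        linarith [h2, mul_comm (s ^ 2) C]
      rw [hasDerivAt_iff_isLittleO]
      simp only [hQ0, sub_zero, smul_zero, zero_smul]
      have hbig : (fun s : ℝ => Q s - 0) =O[nhds 0] fun s => s ^ 2 := by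
        refine Asymptotics.IsBigO.of_bound C (Filter.Eventually.of_forall fun s => ?_)
        simpa [abs_of_nonneg (sq_nonneg s), sq_abs] using hQle s
      simpa using hbig.trans_isLittleO (Asymptotics.isLittleO_pow_id one_lt_two)
    -- assemble
    have hdiv : HasDerivAt (fun t : ℝ => t / β) (1 / β) 0 := by
      simpa using (hasDerivAt_id (0 : ℝ)).div_const β
    have hg2 : HasDerivAt (fun t : ℝ => G (W + (t / β) • sgl (Fin.last k) v)) 0 0 := by
      have h0 : HasDerivAt (fun s : ℝ => G (W + s • sgl (Fin.last k) v)) 0 ((0 : ℝ) / β) := by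
        simpa using hlineG (sgl (Fin.last k) v)
      have h := h0.comp 0 hdiv; rw [zero_mul] at h; exact h
    have hQc : HasDerivAt (fun t : ℝ => Q (t / β)) 0 0 := by
      have h0 : HasDerivAt Q 0 ((0 : ℝ) / β) := by simpa using hQderiv
      have h := h0.comp 0 hdiv; rw [zero_mul] at h; exact h
    have hR : HasDerivAt (fun t : ℝ => (1 - β) * G W
        + (β * G (W + (t / β) • sgl (Fin.last k) v) + ((β ^ 2 - β) / 2) * Q (t / β))) 0 0 := by
      have := ((hg2.const_mul β).add (hQc.const_mul ((β ^ 2 - β) / 2))).const_add ((1 - β) * G W)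
      simpa using this
    have h1 := hlineF (sgl (Sum.inr ℓ : Fin k ⊕ Fin (n + 1)) v)
    have heq : (fun t : ℝ => F (U + t • sgl (Sum.inr ℓ : Fin k ⊕ Fin (n + 1)) v))
        = fun t : ℝ => (1 - β) * G W + (β * G (W + (t / β) • sgl (Fin.last k) v)
            + ((β ^ 2 - β) / 2) * Q (t / β)) := funext key2
    rw [heq] at h1
    exact h1.unique hR
  -- conclude
  ext E
  have hE : E = ∑ r, Pi.single r (E r) := (Finset.univ_sum_single E).symm
  rw [hE, map_sum]
  rw [Finset.sum_eq_zero]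
  · simp
  · intro r _
    cases r with
    | inl i => exact hAinl i (E (Sum.inl i))
    | inr ℓ => exact hAinr ℓ (E (Sum.inr ℓ))
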